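/- arXiv:1702.01673 — 2 statements merged into one kernel-verified Lean document; each statement's English description precedes it below -/
import Mathlib

section
/- Let η be a Borel probability measure on ℝ² with marginals μ and ν. Suppose there exist sequences {z_n}, {w_n} ⊂ ℂ⁺ such that lim_{n→∞} √(Im z_n · Im w_n) · |G_η(z_n, w_n)| = +∞. Then at least one of the sequences {G_μ(z_n)}_n and {G_ν(w_n)}_n is unbounded; in particular, at least one of the Cauchy transforms G_μ, G_ν is unbounded on ℂ⁺. -/
open MeasureTheory Complex Filter Topology

/-- The (one-variable) Cauchy transform of a measure on `ℝ`,
`G_μ(z) = ∫ 1/(z - t) dμ(t)`. -/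
noncomputable def cauchyTransform (μ : Measure ℝ) (z : ℂ) : ℂ :=
  ∫ t, (z - (t : ℂ))⁻¹ ∂μ

/-- The two-variable Cauchy transform of a measure on `ℝ²`,
`G_η(z, w) = ∫ 1/((z - t)(w - s)) dη(t, s)`. -/
noncomputable def cauchyTransform2 (η : Measure (ℝ × ℝ)) (z w : ℂ) : ℂ :=
  ∫ p, ((z - (p.1 : ℂ)) * (w - (p.2 : ℂ)))⁻¹ ∂η

/-! Since `Im (z - t)⁻¹ = -Im z · |z - t|⁻²`, the energy `Im z · ∫ |z - t|⁻² dμ(t)` equals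
`-Im G_μ(z) ≤ |G_μ(z)|`. Bounding `|G_η(z, w)|` by `∫ |z - t|⁻¹ |w - s|⁻¹ dη(t, s)` and applying
Cauchy–Schwarz gives `Im z · Im w · |G_η(z, w)|² ≤ |G_μ(z)| · |G_ν(w)|`, so bounded sequences
`G_μ(z_n)` and `G_ν(w_n)` would keep `√(Im z_n · Im w_n) · |G_η(z_n, w_n)|` bounded. -/

lemma norm_inv_sub_ofReal_le {z : ℂ} (hz : 0 < z.im) (t : ℝ) : ‖(z - t)⁻¹‖ ≤ z.im⁻¹ := by
  rw [norm_inv]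
  refine inv_anti₀ hz ?_
  simpa [abs_of_pos hz] using abs_im_le_norm (z - t)

lemma im_inv_sub_ofReal (z : ℂ) (t : ℝ) : ((z - t)⁻¹).im = -(z.im * ‖(z - t)⁻¹‖ ^ 2) := by
  rw [inv_im, Complex.sq_norm, normSq_inv, sub_im, ofReal_im, sub_zero, neg_div, div_eq_mul_inv]

lemma memLp_top_inv_sub_ofReal {α : Type*} [MeasurableSpace α] {μ : Measure α} {z : ℂ}
    (hz : 0 < z.im) {φ : α → ℝ} (hφ : Measurable φ) :
    MemLp (fun x => (z - φ x)⁻¹) ⊤ μ := by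
  refine memLp_top_of_bound ?_ z.im⁻¹ (.of_forall fun x => norm_inv_sub_ofReal_le hz (φ x))
  exact (measurable_const.sub (Complex.measurable_ofReal.comp hφ)).inv.aestronglyMeasurable

lemma cauchyTransform_im (μ : Measure ℝ) [IsFiniteMeasure μ] {z : ℂ} (hz : 0 < z.im) :
    (cauchyTransform μ z).im = -(z.im * ∫ t, ‖(z - t)⁻¹‖ ^ 2 ∂μ) := by
  have h := integral_im ((memLp_top_inv_sub_ofReal (μ := μ) hz measurable_id).integrable le_top)
  simp only [RCLike.im_to_complex, im_inv_sub_ofReal, id] at h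
  rw [cauchyTransform, ← h, integral_neg, integral_const_mul]

lemma im_mul_integral_norm_inv_sub_sq_le (μ : Measure ℝ) [IsFiniteMeasure μ] {z : ℂ}
    (hz : 0 < z.im) : z.im * ∫ t, ‖(z - t)⁻¹‖ ^ 2 ∂μ ≤ ‖cauchyTransform μ z‖ := by
  rw [← neg_neg (z.im * _), ← cauchyTransform_im μ hz]
  exact (neg_le_abs _).trans (abs_im_le_norm _)

lemma integral_mul_le_sqrt_mul_sqrt {α : Type*} [MeasurableSpace α] {μ : Measure α}
    {f g : α → ℝ} (hf₀ : 0 ≤ᵐ[μ] f) (hg₀ : 0 ≤ᵐ[μ] g) (hf : MemLp f 2 μ) (hg : MemLp g 2 μ) :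
    ∫ x, f x * g x ∂μ ≤ √(∫ x, f x ^ 2 ∂μ) * √(∫ x, g x ^ 2 ∂μ) := by
  have h := integral_mul_le_Lp_mul_Lq_of_nonneg Real.HolderConjugate.two_two hf₀ hg₀
    (by simpa using hf) (by simpa using hg)
  simpa only [Real.rpow_two, Real.sqrt_eq_rpow] using h

lemma integral_norm_inv_sub_sq_map {α : Type*} [MeasurableSpace α] (μ : Measure α) (z : ℂ)
    {φ : α → ℝ} (hφ : Measurable φ) :
    ∫ x, ‖(z - φ x)⁻¹‖ ^ 2 ∂μ = ∫ t, ‖(z - t)⁻¹‖ ^ 2 ∂(μ.map φ) := by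
  rw [integral_map hφ.aemeasurable]
  exact ((measurable_const.sub Complex.measurable_ofReal).inv.norm.pow_const 2).aestronglyMeasurable

theorem sqrt_im_mul_im_mul_norm_cauchyTransform2_le (η : Measure (ℝ × ℝ)) [IsFiniteMeasure η]
    {z w : ℂ} (hz : 0 < z.im) (hw : 0 < w.im) :
    √(z.im * w.im) * ‖cauchyTransform2 η z w‖ ≤
      √(‖cauchyTransform (η.map Prod.fst) z‖ * ‖cauchyTransform (η.map Prod.snd) w‖) := by
  have hprod : ‖cauchyTransform2 η z w‖ ≤
      ∫ p, ‖(z - p.1)⁻¹‖ * ‖(w - p.2)⁻¹‖ ∂η := by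
    refine (norm_integral_le_integral_norm _).trans_eq ?_
    simp only [mul_inv, norm_mul]
  have hCS := integral_mul_le_sqrt_mul_sqrt (μ := η) (.of_forall fun _ => norm_nonneg _)
    (.of_forall fun _ => norm_nonneg _)
    ((memLp_top_inv_sub_ofReal hz measurable_fst).mono_exponent le_top).norm
    ((memLp_top_inv_sub_ofReal hw measurable_snd).mono_exponent le_top).norm
  rw [integral_norm_inv_sub_sq_map η z measurable_fst,
    integral_norm_inv_sub_sq_map η w measurable_snd] at hCS
  set A := ∫ t, ‖(z - t)⁻¹‖ ^ 2 ∂(η.map Prod.fst)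
  set B := ∫ t, ‖(w - t)⁻¹‖ ^ 2 ∂(η.map Prod.snd)
  have hA₀ : 0 ≤ A := integral_nonneg fun _ => sq_nonneg _
  calc √(z.im * w.im) * ‖cauchyTransform2 η z w‖
      ≤ √(z.im * w.im) * (√A * √B) := by gcongr; exact hprod.trans hCS
    _ = √((z.im * A) * (w.im * B)) := by
        rw [← Real.sqrt_mul hA₀, ← Real.sqrt_mul (mul_nonneg hz.le hw.le)]
        ring_nf
    _ ≤ √(‖cauchyTransform (η.map Prod.fst) z‖ * ‖cauchyTransform (η.map Prod.snd) w‖) := by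
        gcongr
        exacts [im_mul_integral_norm_inv_sub_sq_le _ hz, im_mul_integral_norm_inv_sub_sq_le _ hw]

lemma not_isBounded_range_or_of_tendsto_atTop {ι E F : Type*} [SeminormedAddCommGroup E]
    [SeminormedAddCommGroup F] {l : Filter ι} [l.NeBot] {a : ι → ℝ} {u : ι → E} {v : ι → F}
    (ha : Tendsto a l atTop) (h : ∀ i, a i ≤ √(‖u i‖ * ‖v i‖)) :
    ¬Bornology.IsBounded (Set.range u) ∨ ¬Bornology.IsBounded (Set.range v) := by
  by_contra! hbdd
  obtain ⟨C, hC⟩ := isBounded_iff_forall_norm_le.mp hbdd.1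
  obtain ⟨D, hD⟩ := isBounded_iff_forall_norm_le.mp hbdd.2
  obtain ⟨i, hi⟩ := (ha.eventually_gt_atTop √(C * D)).exists
  have hCi : ‖u i‖ ≤ C := hC _ ⟨i, rfl⟩
  refine hi.not_ge ((h i).trans (Real.sqrt_le_sqrt ?_))
  exact mul_le_mul hCi (hD _ ⟨i, rfl⟩) (norm_nonneg _) ((norm_nonneg _).trans hCi)

theorem stmt10 (η : Measure (ℝ × ℝ)) [IsProbabilityMeasure η]
    (z w : ℕ → ℂ) (hz : ∀ n, 0 < (z n).im) (hw : ∀ n, 0 < (w n).im)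
    (hlim : Tendsto
      (fun n => Real.sqrt ((z n).im * (w n).im) * ‖cauchyTransform2 η (z n) (w n)‖)
      atTop atTop) :
    (¬ Bornology.IsBounded (Set.range fun n => cauchyTransform (η.map Prod.fst) (z n)) ∨
     ¬ Bornology.IsBounded (Set.range fun n => cauchyTransform (η.map Prod.snd) (w n))) ∧
    (¬ Bornology.IsBounded (cauchyTransform (η.map Prod.fst) '' {z : ℂ | 0 < z.im}) ∨
     ¬ Bornology.IsBounded (cauchyTransform (η.map Prod.snd) '' {z : ℂ | 0 < z.im})) := by
  have hseq := not_isBounded_range_or_of_tendsto_atTop hlim fun n =>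
    sqrt_im_mul_im_mul_norm_cauchyTransform2_le η (hz n) (hw n)
  refine ⟨hseq, hseq.imp (mt (·.subset ?_)) (mt (·.subset ?_))⟩
  · rintro _ ⟨n, rfl⟩
    exact Set.mem_image_of_mem _ (hz n)
  · rintro _ ⟨n, rfl⟩
    exact Set.mem_image_of_mem _ (hw n)
end

section
/- Let η₁, η₂, η be Borel probability measures on ℝ², with marginals μⱼ, νⱼ of ηⱼ (j = 1, 2) and μ, ν of η. Let ξ, ζ, ξ₁, ξ₂, ζ₁, ζ₂ ∈ ℝ with ξ₁ + ξ₂ = ξ and ζ₁ + ζ₂ = ζ, and assume η({(ξ,ζ)}) > 0, μⱼ({ξⱼ}) > 0 and νⱼ({ζⱼ}) > 0 for j = 1, 2. Let ω_{a₁}, ω_{a₂}, ω_{b₁}, ω_{b₂} : ℂ⁺ → ℂ⁺ be functions such that: (i) lim_{y↓0} (ω_{aⱼ}(ξ + iy) − ξⱼ)/(iy) = μⱼ({ξⱼ})/μ({ξ}) and lim_{y↓0} (ω_{bⱼ}(ζ + iy) − ζⱼ)/(iy) = νⱼ({ζⱼ})/ν({ζ}) for j = 1, 2 (limits in ℂ);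 (ii) for all sufficiently small y > 0, G_η(ξ+iy, ζ+iy) ≠ 0, G_{ηⱼ}(ω_{aⱼ}(ξ+iy), ω_{bⱼ}(ζ+iy)) ≠ 0 for j = 1,2, and 1/G_{η₁}(ω_{a₁}(ξ+iy), ω_{b₁}(ζ+iy)) + 1/G_{η₂}(ω_{a₂}(ξ+iy), ω_{b₂}(ζ+iy)) = 1/(G_μ(ξ+iy)·G_ν(ζ+iy)) + 1/G_η(ξ+iy, ζ+iy); (iii) for all z, w ∈ ℂ⁺ and j = 1, 2: (Im ω_{aⱼ}(z))·(Im ω_{bⱼ}(w))·|G_{ηⱼ}(ω_{aⱼ}(z), ω_{bⱼ}(w))|² ≥ (Im z)·(Im w)·|G_η(z,w)|². Then ηⱼ({(ξⱼ, ζⱼ)}) > 0 for j = 1, 2, and 1 + μ({ξ})·ν({ζ})/η({(ξ,ζ)}) = μ₁({ξ₁})·ν₁({ζ₁})/η₁({(ξ₁,ζ₁)}) + μ₂({ξ₂})·ν₂({ζ₂})/η₂({(ξ₂,ζ₂)}). -/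
open MeasureTheory Complex Filter Topology

/-!
By dominated convergence, if `z → x ∈ ℝ` inside a Stolz angle `‖z - x‖ ≤ K Im z` then
`(z - x) G_μ(z) → μ{x}`, and likewise `(z - x)(w - x') G_η(z, w) → η{(x, x')}`. The vertical
paths `ξ + iy`, `ζ + iy` are such paths, and so, by (i), are `ω_{aⱼ}(ξ + iy)`, `ω_{bⱼ}(ζ + iy)`,
since `ω_{aⱼ}(ξ + iy) - ξⱼ ≈ iy · μⱼ{ξⱼ}/μ{ξ}`. Hence `(iy)² G_η(ξ + iy, ζ + iy) → η{(ξ, ζ)}` and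
`(iy)² G_{ηⱼ}(ω_{aⱼ}, ω_{bⱼ}) → ηⱼ{(ξⱼ, ζⱼ)} μ{ξ} ν{ζ} / (μⱼ{ξⱼ} νⱼ{ζⱼ})`. Multiplied by `y²`, the
bound (iii) becomes `‖(iy)² G_η‖² ≤ (Im ω_{aⱼ}/y)(Im ω_{bⱼ}/y) ‖(iy)² G_{ηⱼ}‖²`, whose limit forces
`ηⱼ{(ξⱼ, ζⱼ)} > 0`; multiplying (ii) by `(iy)⁻²` and letting `y ↓ 0` gives the atom identity.
-/

lemma measureReal_pos_of_pos {α : Type*} [MeasurableSpace α] {μ : Measure α} [IsFiniteMeasure μ]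
    {s : Set α} (h : 0 < μ s) : 0 < μ.real s :=
  ENNReal.toReal_pos h.ne' (measure_ne_top μ s)

lemma measure_singleton_le_map_singleton {α β : Type*} [MeasurableSpace α] [MeasurableSpace β]
    (μ : Measure α) {f : α → β} (hf : Measurable f) (a : α) : μ {a} ≤ μ.map f {f a} :=
  calc μ {a} ≤ μ (f ⁻¹' {f a}) := measure_mono (Set.singleton_subset_iff.2 rfl)
    _ ≤ μ.map f {f a} := Measure.le_map_apply hf.aemeasurable _

section Nontangential

variable {ι : Type*} {l : Filter ι}

def TendstoNontangentially (f : ι → ℂ) (l : Filter ι) (x K : ℝ) : Prop :=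
  Tendsto f l (𝓝 x) ∧ ∀ᶠ i in l, 0 < (f i).im ∧ ‖f i - x‖ ≤ K * (f i).im

lemma im_le_norm_sub_ofReal (z : ℂ) (t : ℝ) : z.im ≤ ‖z - t‖ := by
  simpa using Complex.im_le_norm (z - t)

lemma sub_ofReal_ne_zero_of_im_pos {z : ℂ} (hz : 0 < z.im) (t : ℝ) : z - t ≠ 0 :=
  norm_pos_iff.1 (hz.trans_le (im_le_norm_sub_ofReal z t))

lemma norm_sub_mul_inv_sub_ofReal_le {z : ℂ} {x K : ℝ} (hz : 0 < z.im)
    (hzK : ‖z - x‖ ≤ K * z.im) (t : ℝ) : ‖(z - x) * (z - t)⁻¹‖ ≤ K := by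
  have hzt := im_le_norm_sub_ofReal z t
  have hK : 0 ≤ K := nonneg_of_mul_nonneg_left ((norm_nonneg _).trans hzK) hz
  rw [norm_mul, norm_inv, ← div_eq_mul_inv, div_le_iff₀ (hz.trans_le hzt)]
  exact hzK.trans (mul_le_mul_of_nonneg_left hzt hK)

lemma tendsto_integral_of_tendsto_indicator_one {α : Type*} [MeasurableSpace α] {ν : Measure α}
    [IsFiniteMeasure ν] [l.IsCountablyGenerated] {F : ι → α → ℂ} {s : Set α}
    (hs : MeasurableSet s) {C : ℝ} (hF : ∀ i, Measurable (F i))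
    (hbound : ∀ᶠ i in l, ∀ a, ‖F i a‖ ≤ C)
    (hlim : ∀ a, Tendsto (fun i => F i a) l (𝓝 (s.indicator 1 a))) :
    Tendsto (fun i => ∫ a, F i a ∂ν) l (𝓝 (ν.real s)) := by
  have h := tendsto_integral_filter_of_dominated_convergence (μ := ν) (fun _ => C)
    (Eventually.of_forall fun i => (hF i).aestronglyMeasurable)
    (hbound.mono fun _ hi => ae_of_all _ hi) (integrable_const C) (ae_of_all _ hlim)
  rwa [show (s.indicator 1 : α → ℂ) = s.indicator fun _ => 1 from rfl,
    integral_indicator_const _ hs, real_smul, mul_one] at h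

namespace TendstoNontangentially

variable {f g : ι → ℂ} {x y K L : ℝ}

lemma tendsto_sub_mul_inv_sub (h : TendstoNontangentially f l x K) (t : ℝ) :
    Tendsto (fun i => (f i - x) * (f i - t)⁻¹) l (𝓝 (({x} : Set ℝ).indicator 1 t)) := by
  obtain ⟨hlim, hcone⟩ := h
  by_cases htx : t = x
  · subst htx
    rw [Set.indicator_of_mem (Set.mem_singleton t), Pi.one_apply]
    refine tendsto_const_nhds.congr' ?_
    filter_upwards [hcone] with i hi
    exact (mul_inv_cancel₀ (sub_ofReal_ne_zero_of_im_pos hi.1 t)).symm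
  · have hxt : (x : ℂ) - t ≠ 0 := sub_ne_zero.2 (by exact_mod_cast Ne.symm htx)
    simpa [htx] using (hlim.sub_const (x : ℂ)).mul ((hlim.sub_const (t : ℂ)).inv₀ hxt)

lemma norm_sub_mul_inv_sub_le (h : TendstoNontangentially f l x K) :
    ∀ᶠ i in l, ∀ t : ℝ, ‖(f i - x) * (f i - t)⁻¹‖ ≤ K :=
  h.2.mono fun _ hi => norm_sub_mul_inv_sub_ofReal_le hi.1 hi.2

lemma tendsto_sub_mul_cauchyTransform [l.IsCountablyGenerated] (μ : Measure ℝ)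
    [IsFiniteMeasure μ] (h : TendstoNontangentially f l x K) :
    Tendsto (fun i => (f i - x) * cauchyTransform μ (f i)) l (𝓝 (μ.real {x})) := by
  simp_rw [cauchyTransform, ← integral_const_mul]
  exact tendsto_integral_of_tendsto_indicator_one (measurableSet_singleton x)
    (fun i => by fun_prop) h.norm_sub_mul_inv_sub_le h.tendsto_sub_mul_inv_sub

lemma tendsto_sub_mul_sub_mul_cauchyTransform2 [l.IsCountablyGenerated]
    (η : Measure (ℝ × ℝ)) [IsFiniteMeasure η]
    (hf : TendstoNontangentially f l x K) (hg : TendstoNontangentially g l y L) :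
    Tendsto (fun i => (f i - x) * (g i - y) * cauchyTransform2 η (f i) (g i)) l
      (𝓝 (η.real {(x, y)})) := by
  simp_rw [cauchyTransform2, ← integral_const_mul]
  refine tendsto_integral_of_tendsto_indicator_one (C := K * L) (measurableSet_singleton _)
    (fun i => by fun_prop) ?_ fun p => ?_
  · filter_upwards [hf.norm_sub_mul_inv_sub_le, hg.norm_sub_mul_inv_sub_le] with i hfi hgi p
    rw [mul_inv, mul_mul_mul_comm, norm_mul]
    exact mul_le_mul (hfi p.1) (hgi p.2) (norm_nonneg _) ((norm_nonneg _).trans (hfi p.1))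
  · rw [← Set.singleton_prod_singleton, ← Prod.mk.eta (p := p), Set.indicator_prod_one]
    exact ((hf.tendsto_sub_mul_inv_sub p.1).mul (hg.tendsto_sub_mul_inv_sub p.2)).congr
      fun i => by rw [mul_inv]; ring

end TendstoNontangentially

end Nontangential

lemma re_div_ofReal_mul_I (v : ℂ) (y : ℝ) : (v / (y * I)).re = v.im / y := by
  rw [mul_comm, ← div_div, div_ofReal_re, div_I]
  simp

lemma tendsto_im_div_of_tendsto_div {l : Filter ℝ} {f : ℝ → ℂ} {x c : ℝ}
    (h : Tendsto (fun y : ℝ => (f y - x) / (y * I)) l (𝓝 c)) :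
    Tendsto (fun y => (f y).im / y) l (𝓝 c) := by
  simpa [Function.comp_def, re_div_ofReal_mul_I] using (continuous_re.tendsto _).comp h

lemma tendstoNontangentially_of_tendsto_div {f : ℝ → ℂ} {x c : ℝ} (hc : 0 < c)
    (h : Tendsto (fun y : ℝ => (f y - x) / (y * I)) (𝓝[>] 0) (𝓝 c)) :
    TendstoNontangentially f (𝓝[>] 0) x 2 := by
  have hy : ∀ᶠ y : ℝ in 𝓝[>] 0, 0 < y := self_mem_nhdsWithin
  have him := tendsto_im_div_of_tendsto_div h
  have hnorm : Tendsto (fun y : ℝ => ‖f y - x‖ / y) (𝓝[>] 0) (𝓝 c) := by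
    have h' : Tendsto (fun y : ℝ => ‖(f y - x) / (y * I)‖) (𝓝[>] 0) (𝓝 c) := by
      simpa [abs_of_pos hc] using h.norm
    refine h'.congr' ?_
    filter_upwards [hy] with y hy
    simp [abs_of_pos hy]
  constructor
  · have hu : Tendsto (fun y : ℝ => (y : ℂ) * I) (𝓝[>] 0) (𝓝 0) := by
      simpa using ((continuous_ofReal.mul_const I).tendsto 0).mono_left nhdsWithin_le_nhds
    have := tendsto_const_nhds (x := (x : ℂ)).add (hu.mul h)
    rw [zero_mul, add_zero] at this
    refine this.congr' ?_
    filter_upwards [hy] with y hy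
    rw [mul_div_cancel₀ _ (by simp [hy.ne'])]
    ring
  · have hcone := (him.const_mul 2).sub hnorm
    filter_upwards [hy, him.eventually (lt_mem_nhds hc),
      hcone.eventually (lt_mem_nhds (by linarith : (0 : ℝ) < 2 * c - c))] with y hy hpos hlt
    rw [mul_div_assoc', ← sub_div, div_pos_iff_of_pos_right hy] at hlt
    exact ⟨(div_pos_iff_of_pos_right hy).1 hpos, by linarith⟩

lemma tendstoNontangentially_vertical (x : ℝ) :
    TendstoNontangentially (fun y : ℝ => x + y * I) (𝓝[>] 0) x 2 :=
  tendstoNontangentially_of_tendsto_div one_pos <| tendsto_const_nhds.congr' <| by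
    filter_upwards [self_mem_nhdsWithin] with y (hy : 0 < y)
    simp [hy.ne']

lemma tendsto_mul_cauchyTransform_vertical (μ : Measure ℝ) [IsFiniteMeasure μ] (x : ℝ) :
    Tendsto (fun y : ℝ => y * I * cauchyTransform μ (x + y * I)) (𝓝[>] 0)
      (𝓝 (μ.real {x})) :=
  ((tendstoNontangentially_vertical x).tendsto_sub_mul_cauchyTransform μ).congr
    fun y => by rw [add_sub_cancel_left]

lemma tendsto_mul_cauchyTransform2_vertical (η : Measure (ℝ × ℝ)) [IsFiniteMeasure η]
    (x x' : ℝ) :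
    Tendsto (fun y : ℝ => y * I * (y * I) * cauchyTransform2 η (x + y * I) (x' + y * I))
      (𝓝[>] 0) (𝓝 (η.real {(x, x')})) :=
  ((tendstoNontangentially_vertical x).tendsto_sub_mul_sub_mul_cauchyTransform2 η
    (tendstoNontangentially_vertical x')).congr fun y => by
      rw [add_sub_cancel_left, add_sub_cancel_left]

section Subordination

variable {ωa ωb : ℂ → ℂ} {ξ ζ ξ' ζ' ca cb : ℝ}

lemma tendsto_mul_cauchyTransform2_subordinated (η' : Measure (ℝ × ℝ)) [IsFiniteMeasure η']
    (hca : 0 < ca) (hcb : 0 < cb)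
    (hωa : Tendsto (fun y : ℝ => (ωa (ξ + y * I) - ξ') / (y * I)) (𝓝[>] 0) (𝓝 ca))
    (hωb : Tendsto (fun y : ℝ => (ωb (ζ + y * I) - ζ') / (y * I)) (𝓝[>] 0) (𝓝 cb)) :
    Tendsto (fun y : ℝ => y * I * (y * I) *
        cauchyTransform2 η' (ωa (ξ + y * I)) (ωb (ζ + y * I)))
      (𝓝[>] 0) (𝓝 (η'.real {(ξ', ζ')} / (ca * cb))) := by
  have hna := tendstoNontangentially_of_tendsto_div hca hωa
  have hnb := tendstoNontangentially_of_tendsto_div hcb hωb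
  have hcc : (ca : ℂ) * cb ≠ 0 := by exact_mod_cast (mul_pos hca hcb).ne'
  refine ((hna.tendsto_sub_mul_sub_mul_cauchyTransform2 η' hnb).div (hωa.mul hωb) hcc).congr' ?_
  filter_upwards [self_mem_nhdsWithin, hna.2, hnb.2] with y (hy : 0 < y) hya hyb
  have hu : (y : ℂ) * I ≠ 0 := by simp [hy.ne']
  have := sub_ofReal_ne_zero_of_im_pos hya.1 ξ'
  have := sub_ofReal_ne_zero_of_im_pos hyb.1 ζ'
  simp only [Pi.div_apply]
  field_simp

lemma norm_sq_mul_cauchyTransform2_le_of_bound (η η' : Measure (ℝ × ℝ))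
    (hbound : ∀ z w : ℂ, 0 < z.im → 0 < w.im →
      z.im * w.im * ‖cauchyTransform2 η z w‖ ^ 2 ≤
        (ωa z).im * (ωb w).im * ‖cauchyTransform2 η' (ωa z) (ωb w)‖ ^ 2)
    {y : ℝ} (hy : 0 < y) :
    ‖y * I * (y * I) * cauchyTransform2 η (ξ + y * I) (ζ + y * I)‖ ^ 2 ≤
      (ωa (ξ + y * I)).im / y * ((ωb (ζ + y * I)).im / y) *
        ‖y * I * (y * I) * cauchyTransform2 η' (ωa (ξ + y * I)) (ωb (ζ + y * I))‖ ^ 2 := by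
  have h := hbound (ξ + y * I) (ζ + y * I) (by simpa using hy) (by simpa using hy)
  simp only [add_im, ofReal_im, mul_im, ofReal_re, I_im, I_re, mul_zero, mul_one, zero_add,
    add_zero] at h
  simp only [norm_mul, norm_real, Real.norm_eq_abs, abs_of_pos hy, norm_I, mul_one]
  calc (y * y * ‖cauchyTransform2 η (ξ + y * I) (ζ + y * I)‖) ^ 2
      = y ^ 2 * (y * y * ‖cauchyTransform2 η (ξ + y * I) (ζ + y * I)‖ ^ 2) := by ring
    _ ≤ y ^ 2 * ((ωa (ξ + y * I)).im * (ωb (ζ + y * I)).im *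
          ‖cauchyTransform2 η' (ωa (ξ + y * I)) (ωb (ζ + y * I))‖ ^ 2) := by gcongr
    _ = _ := by field_simp

lemma measure_singleton_pos_of_subordination_bound (η η' : Measure (ℝ × ℝ))
    [IsFiniteMeasure η'] (hca : 0 < ca) (hcb : 0 < cb)
    (hωa : Tendsto (fun y : ℝ => (ωa (ξ + y * I) - ξ') / (y * I)) (𝓝[>] 0) (𝓝 ca))
    (hωb : Tendsto (fun y : ℝ => (ωb (ζ + y * I) - ζ') / (y * I)) (𝓝[>] 0) (𝓝 cb))
    {A : ℂ} (hA0 : A ≠ 0)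
    (hA : Tendsto (fun y : ℝ => y * I * (y * I) * cauchyTransform2 η (ξ + y * I) (ζ + y * I))
      (𝓝[>] 0) (𝓝 A))
    (hbound : ∀ z w : ℂ, 0 < z.im → 0 < w.im →
      z.im * w.im * ‖cauchyTransform2 η z w‖ ^ 2 ≤
        (ωa z).im * (ωb w).im * ‖cauchyTransform2 η' (ωa z) (ωb w)‖ ^ 2) :
    0 < η' {(ξ', ζ')} := by
  refine pos_iff_ne_zero.2 fun h0 => hA0 ?_
  have hB := tendsto_mul_cauchyTransform2_subordinated η' hca hcb hωa hωb
  rw [measureReal_def, h0, ENNReal.toReal_zero, ofReal_zero, zero_div] at hB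
  have hlim := le_of_tendsto_of_tendsto (hA.norm.pow 2)
    (((tendsto_im_div_of_tendsto_div hωa).mul (tendsto_im_div_of_tendsto_div hωb)).mul
      (hB.norm.pow 2))
    (eventually_mem_nhdsWithin.mono fun _ hy =>
      norm_sq_mul_cauchyTransform2_le_of_bound η η' hbound hy)
  simpa using hlim

end Subordination

theorem stmt13_general
    (η₁ η₂ η : Measure (ℝ × ℝ))
    [IsProbabilityMeasure η₁] [IsProbabilityMeasure η₂] [IsProbabilityMeasure η]
    (ξ ζ ξ₁ ξ₂ ζ₁ ζ₂ : ℝ)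
    (hatom : 0 < η ({(ξ, ζ)} : Set (ℝ × ℝ)))
    (hμ₁ : 0 < (η₁.map Prod.fst) {ξ₁}) (hμ₂ : 0 < (η₂.map Prod.fst) {ξ₂})
    (hν₁ : 0 < (η₁.map Prod.snd) {ζ₁}) (hν₂ : 0 < (η₂.map Prod.snd) {ζ₂})
    (ωa₁ ωa₂ ωb₁ ωb₂ : ℂ → ℂ)
    -- (i) Julia–Carathéodory behavior of the subordination functions at the atoms
    (hJCa₁ : Tendsto (fun y : ℝ => (ωa₁ ((ξ : ℂ) + (y : ℂ) * Complex.I) - (ξ₁ : ℂ)) /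
        ((y : ℂ) * Complex.I)) (𝓝[>] (0 : ℝ))
      (𝓝 ((((η₁.map Prod.fst) {ξ₁}).toReal / ((η.map Prod.fst) {ξ}).toReal : ℝ) : ℂ)))
    (hJCa₂ : Tendsto (fun y : ℝ => (ωa₂ ((ξ : ℂ) + (y : ℂ) * Complex.I) - (ξ₂ : ℂ)) /
        ((y : ℂ) * Complex.I)) (𝓝[>] (0 : ℝ))
      (𝓝 ((((η₂.map Prod.fst) {ξ₂}).toReal / ((η.map Prod.fst) {ξ}).toReal : ℝ) : ℂ)))
    (hJCb₁ : Tendsto (fun y : ℝ => (ωb₁ ((ζ : ℂ) + (y : ℂ) * Complex.I) - (ζ₁ : ℂ)) /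
        ((y : ℂ) * Complex.I)) (𝓝[>] (0 : ℝ))
      (𝓝 ((((η₁.map Prod.snd) {ζ₁}).toReal / ((η.map Prod.snd) {ζ}).toReal : ℝ) : ℂ)))
    (hJCb₂ : Tendsto (fun y : ℝ => (ωb₂ ((ζ : ℂ) + (y : ℂ) * Complex.I) - (ζ₂ : ℂ)) /
        ((y : ℂ) * Complex.I)) (𝓝[>] (0 : ℝ))
      (𝓝 ((((η₂.map Prod.snd) {ζ₂}).toReal / ((η.map Prod.snd) {ζ}).toReal : ℝ) : ℂ)))
    -- (ii) the bi-free subordination identity for small y > 0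
    (hsub : ∀ᶠ (y : ℝ) in 𝓝[>] (0 : ℝ),
      cauchyTransform2 η ((ξ : ℂ) + (y : ℂ) * Complex.I) ((ζ : ℂ) + (y : ℂ) * Complex.I) ≠ 0 ∧
      cauchyTransform2 η₁ (ωa₁ ((ξ : ℂ) + (y : ℂ) * Complex.I))
        (ωb₁ ((ζ : ℂ) + (y : ℂ) * Complex.I)) ≠ 0 ∧
      cauchyTransform2 η₂ (ωa₂ ((ξ : ℂ) + (y : ℂ) * Complex.I))
        (ωb₂ ((ζ : ℂ) + (y : ℂ) * Complex.I)) ≠ 0 ∧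
      (cauchyTransform2 η₁ (ωa₁ ((ξ : ℂ) + (y : ℂ) * Complex.I))
          (ωb₁ ((ζ : ℂ) + (y : ℂ) * Complex.I)))⁻¹ +
        (cauchyTransform2 η₂ (ωa₂ ((ξ : ℂ) + (y : ℂ) * Complex.I))
          (ωb₂ ((ζ : ℂ) + (y : ℂ) * Complex.I)))⁻¹ =
      (cauchyTransform (η.map Prod.fst) ((ξ : ℂ) + (y : ℂ) * Complex.I) *
          cauchyTransform (η.map Prod.snd) ((ζ : ℂ) + (y : ℂ) * Complex.I))⁻¹ +
        (cauchyTransform2 η ((ξ : ℂ) + (y : ℂ) * Complex.I)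
          ((ζ : ℂ) + (y : ℂ) * Complex.I))⁻¹)
    -- (iii) the bound of Proposition 3.4
    (hbound₁ : ∀ z w : ℂ, 0 < z.im → 0 < w.im →
      z.im * w.im * ‖cauchyTransform2 η z w‖ ^ 2 ≤
        (ωa₁ z).im * (ωb₁ w).im * ‖cauchyTransform2 η₁ (ωa₁ z) (ωb₁ w)‖ ^ 2)
    (hbound₂ : ∀ z w : ℂ, 0 < z.im → 0 < w.im →
      z.im * w.im * ‖cauchyTransform2 η z w‖ ^ 2 ≤
        (ωa₂ z).im * (ωb₂ w).im * ‖cauchyTransform2 η₂ (ωa₂ z) (ωb₂ w)‖ ^ 2) :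
    0 < η₁ ({(ξ₁, ζ₁)} : Set (ℝ × ℝ)) ∧ 0 < η₂ ({(ξ₂, ζ₂)} : Set (ℝ × ℝ)) ∧
    1 + ((η.map Prod.fst) {ξ}).toReal * ((η.map Prod.snd) {ζ}).toReal /
        (η ({(ξ, ζ)} : Set (ℝ × ℝ))).toReal =
      ((η₁.map Prod.fst) {ξ₁}).toReal * ((η₁.map Prod.snd) {ζ₁}).toReal /
        (η₁ ({(ξ₁, ζ₁)} : Set (ℝ × ℝ))).toReal +
      ((η₂.map Prod.fst) {ξ₂}).toReal * ((η₂.map Prod.snd) {ζ₂}).toReal /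
        (η₂ ({(ξ₂, ζ₂)} : Set (ℝ × ℝ))).toReal := by
  simp only [← measureReal_def] at hJCa₁ hJCa₂ hJCb₁ hJCb₂ ⊢
  have hm : 0 < (η.map Prod.fst).real {ξ} := measureReal_pos_of_pos
    (hatom.trans_le (measure_singleton_le_map_singleton η measurable_fst _))
  have hn : 0 < (η.map Prod.snd).real {ζ} := measureReal_pos_of_pos
    (hatom.trans_le (measure_singleton_le_map_singleton η measurable_snd _))
  have hA := tendsto_mul_cauchyTransform2_vertical η ξ ζ
  have hA0 : (η.real {(ξ, ζ)} : ℂ) ≠ 0 := by exact_mod_cast (measureReal_pos_of_pos hatom).ne'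
  have hca₁ := div_pos (measureReal_pos_of_pos hμ₁) hm
  have hca₂ := div_pos (measureReal_pos_of_pos hμ₂) hm
  have hcb₁ := div_pos (measureReal_pos_of_pos hν₁) hn
  have hcb₂ := div_pos (measureReal_pos_of_pos hν₂) hn
  have hpos₁ := measure_singleton_pos_of_subordination_bound η η₁ hca₁ hcb₁ hJCa₁ hJCb₁ hA0 hA
    hbound₁
  have hpos₂ := measure_singleton_pos_of_subordination_bound η η₂ hca₂ hcb₂ hJCa₂ hJCb₂ hA0 hA
    hbound₂
  have hB₁ := tendsto_mul_cauchyTransform2_subordinated η₁ hca₁ hcb₁ hJCa₁ hJCb₁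
  have hB₂ := tendsto_mul_cauchyTransform2_subordinated η₂ hca₂ hcb₂ hJCa₂ hJCb₂
  have hM := tendsto_mul_cauchyTransform_vertical (η.map Prod.fst) ξ
  have hN := tendsto_mul_cauchyTransform_vertical (η.map Prod.snd) ζ
  have hB₁0 := div_pos (measureReal_pos_of_pos hpos₁) (mul_pos hca₁ hcb₁)
  have hB₂0 := div_pos (measureReal_pos_of_pos hpos₂) (mul_pos hca₂ hcb₂)
  have hlim := tendsto_nhds_unique
    (((hB₁.inv₀ (by exact_mod_cast hB₁0.ne')).add (hB₂.inv₀ (by exact_mod_cast hB₂0.ne'))).congr'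
      (hsub.mono fun y hy => by linear_combination ((y : ℂ) * I * (y * I))⁻¹ * hy.2.2.2))
    (((hM.mul hN).inv₀ (by exact_mod_cast (mul_pos hm hn).ne')).add (hA.inv₀ hA0))
  norm_cast at hlim
  refine ⟨hpos₁, hpos₂, ?_⟩
  field_simp at hlim ⊢
  linear_combination -hlim

theorem stmt13
    (η₁ η₂ η : Measure (ℝ × ℝ))
    [IsProbabilityMeasure η₁] [IsProbabilityMeasure η₂] [IsProbabilityMeasure η]
    (ξ ζ ξ₁ ξ₂ ζ₁ ζ₂ : ℝ)
    (hξ : ξ₁ + ξ₂ = ξ) (hζ : ζ₁ + ζ₂ = ζ)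
    (hatom : 0 < η ({(ξ, ζ)} : Set (ℝ × ℝ)))
    (hμ₁ : 0 < (η₁.map Prod.fst) {ξ₁}) (hμ₂ : 0 < (η₂.map Prod.fst) {ξ₂})
    (hν₁ : 0 < (η₁.map Prod.snd) {ζ₁}) (hν₂ : 0 < (η₂.map Prod.snd) {ζ₂})
    (ωa₁ ωa₂ ωb₁ ωb₂ : ℂ → ℂ)
    (hmap : ∀ z : ℂ, 0 < z.im →
      0 < (ωa₁ z).im ∧ 0 < (ωa₂ z).im ∧ 0 < (ωb₁ z).im ∧ 0 < (ωb₂ z).im)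
    -- (i) Julia–Carathéodory behavior of the subordination functions at the atoms
    (hJCa₁ : Tendsto (fun y : ℝ => (ωa₁ ((ξ : ℂ) + (y : ℂ) * Complex.I) - (ξ₁ : ℂ)) /
        ((y : ℂ) * Complex.I)) (𝓝[>] (0 : ℝ))
      (𝓝 ((((η₁.map Prod.fst) {ξ₁}).toReal / ((η.map Prod.fst) {ξ}).toReal : ℝ) : ℂ)))
    (hJCa₂ : Tendsto (fun y : ℝ => (ωa₂ ((ξ : ℂ) + (y : ℂ) * Complex.I) - (ξ₂ : ℂ)) /
        ((y : ℂ) * Complex.I)) (𝓝[>] (0 : ℝ))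
      (𝓝 ((((η₂.map Prod.fst) {ξ₂}).toReal / ((η.map Prod.fst) {ξ}).toReal : ℝ) : ℂ)))
    (hJCb₁ : Tendsto (fun y : ℝ => (ωb₁ ((ζ : ℂ) + (y : ℂ) * Complex.I) - (ζ₁ : ℂ)) /
        ((y : ℂ) * Complex.I)) (𝓝[>] (0 : ℝ))
      (𝓝 ((((η₁.map Prod.snd) {ζ₁}).toReal / ((η.map Prod.snd) {ζ}).toReal : ℝ) : ℂ)))
    (hJCb₂ : Tendsto (fun y : ℝ => (ωb₂ ((ζ : ℂ) + (y : ℂ) * Complex.I) - (ζ₂ : ℂ)) /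
        ((y : ℂ) * Complex.I)) (𝓝[>] (0 : ℝ))
      (𝓝 ((((η₂.map Prod.snd) {ζ₂}).toReal / ((η.map Prod.snd) {ζ}).toReal : ℝ) : ℂ)))
    -- (ii) the bi-free subordination identity for small y > 0
    (hsub : ∀ᶠ (y : ℝ) in 𝓝[>] (0 : ℝ),
      cauchyTransform2 η ((ξ : ℂ) + (y : ℂ) * Complex.I) ((ζ : ℂ) + (y : ℂ) * Complex.I) ≠ 0 ∧
      cauchyTransform2 η₁ (ωa₁ ((ξ : ℂ) + (y : ℂ) * Complex.I))
        (ωb₁ ((ζ : ℂ) + (y : ℂ) * Complex.I)) ≠ 0 ∧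
      cauchyTransform2 η₂ (ωa₂ ((ξ : ℂ) + (y : ℂ) * Complex.I))
        (ωb₂ ((ζ : ℂ) + (y : ℂ) * Complex.I)) ≠ 0 ∧
      (cauchyTransform2 η₁ (ωa₁ ((ξ : ℂ) + (y : ℂ) * Complex.I))
          (ωb₁ ((ζ : ℂ) + (y : ℂ) * Complex.I)))⁻¹ +
        (cauchyTransform2 η₂ (ωa₂ ((ξ : ℂ) + (y : ℂ) * Complex.I))
          (ωb₂ ((ζ : ℂ) + (y : ℂ) * Complex.I)))⁻¹ =
      (cauchyTransform (η.map Prod.fst) ((ξ : ℂ) + (y : ℂ) * Complex.I) *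
          cauchyTransform (η.map Prod.snd) ((ζ : ℂ) + (y : ℂ) * Complex.I))⁻¹ +
        (cauchyTransform2 η ((ξ : ℂ) + (y : ℂ) * Complex.I)
          ((ζ : ℂ) + (y : ℂ) * Complex.I))⁻¹)
    -- (iii) the bound of Proposition 3.4
    (hbound₁ : ∀ z w : ℂ, 0 < z.im → 0 < w.im →
      z.im * w.im * ‖cauchyTransform2 η z w‖ ^ 2 ≤
        (ωa₁ z).im * (ωb₁ w).im * ‖cauchyTransform2 η₁ (ωa₁ z) (ωb₁ w)‖ ^ 2)
    (hbound₂ : ∀ z w : ℂ, 0 < z.im → 0 < w.im →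
      z.im * w.im * ‖cauchyTransform2 η z w‖ ^ 2 ≤
        (ωa₂ z).im * (ωb₂ w).im * ‖cauchyTransform2 η₂ (ωa₂ z) (ωb₂ w)‖ ^ 2) :
    0 < η₁ ({(ξ₁, ζ₁)} : Set (ℝ × ℝ)) ∧ 0 < η₂ ({(ξ₂, ζ₂)} : Set (ℝ × ℝ)) ∧
    1 + ((η.map Prod.fst) {ξ}).toReal * ((η.map Prod.snd) {ζ}).toReal /
        (η ({(ξ, ζ)} : Set (ℝ × ℝ))).toReal =
      ((η₁.map Prod.fst) {ξ₁}).toReal * ((η₁.map Prod.snd) {ζ₁}).toReal /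
        (η₁ ({(ξ₁, ζ₁)} : Set (ℝ × ℝ))).toReal +
      ((η₂.map Prod.fst) {ξ₂}).toReal * ((η₂.map Prod.snd) {ζ₂}).toReal /
        (η₂ ({(ξ₂, ζ₂)} : Set (ℝ × ℝ))).toReal :=
  stmt13_general η₁ η₂ η ξ ζ ξ₁ ξ₂ ζ₁ ζ₂ hatom hμ₁ hμ₂ hν₁ hν₂ ωa₁ ωa₂ ωb₁ ωb₂ hJCa₁ hJCa₂ hJCb₁
    hJCb₂ hsub hbound₁ hbound₂
end
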